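/- arXiv:1805.02112 — 4 statements merged into one kernel-verified Lean document; each statement's English description precedes it below -/
import Mathlib

section
/- Let K ⊆ L be a finite separable field extension with K infinite, and let x_1, ..., x_n ∈ L be elements that generate L over K, i.e. L = K(x_1, ..., x_n). Then there exists a nonzero polynomial R ∈ K[Λ_1, ..., Λ_n] such that for every (λ_1, ..., λ_n) ∈ K^n with R(λ_1, ..., λ_n) ≠ 0, the element λ_1 x_1 + ... + λ_n x_n is a primitive element, i.e. L = K(λ_1 x_1 + ... + λ_n x_n). In particular, the set of tuples (λ_1, ..., λ_n) ∈ K^n for which λ_1 x_1 + ... + λ_n x_n is primitive contains a nonempty Zariski open subset of K^n. -/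
/-!
A separable finite extension has a primitive element, hence only finitely many intermediate
fields. For each proper intermediate field `F`, the tuples `λ` with `∑ λᵢ xᵢ ∈ F` form a proper
subspace of `Kⁿ` (proper because the `xᵢ` generate `L`), so some nonzero linear form vanishes
on it. The product `R` of these linear forms is nonzero, and `R(λ) ≠ 0` keeps `∑ λᵢ xᵢ` out of
every proper intermediate field, in particular out of `K(∑ λᵢ xᵢ)` unless that field is `L`.
-/

open MvPolynomial

section LinearForms

variable {K ι : Type*} [Field K] [Fintype ι]

theorem LinearMap.exists_mvPolynomial_eval_eq (f : (ι → K) →ₗ[K] K) :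
    ∃ P : MvPolynomial ι K, ∀ v, eval v P = f v := by
  classical
  refine ⟨∑ i, C (f (Pi.single i 1)) * X i, fun v => ?_⟩
  have hsingle (i : ι) : (fun j => if i = j then (1 : K) else 0) = Pi.single i 1 := by
    ext j
    simp [Pi.single_apply, eq_comm]
  simp [f.pi_apply_eq_sum_univ v, hsingle, mul_comm]

theorem Submodule.exists_mvPolynomial_ne_zero_eval_eq_zero {V : Submodule K (ι → K)}
    (hV : V < ⊤) : ∃ P : MvPolynomial ι K, P ≠ 0 ∧ ∀ v ∈ V, eval v P = 0 := by
  obtain ⟨f, hf, hVf⟩ := V.exists_le_ker_of_lt_top hV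
  obtain ⟨P, hP⟩ := f.exists_mvPolynomial_eval_eq
  refine ⟨P, fun h => hf (LinearMap.ext fun v => by simp [← hP, h]), fun v hv => ?_⟩
  rw [hP]
  exact hVf hv

theorem Set.Finite.exists_mvPolynomial_ne_zero_eval_eq_zero {s : Set (Submodule K (ι → K))}
    (hs : s.Finite) (hlt : ∀ V ∈ s, V < ⊤) :
    ∃ P : MvPolynomial ι K, P ≠ 0 ∧ ∀ V ∈ s, ∀ v ∈ V, eval v P = 0 := by
  choose! P hP0 hPV using fun V hV => Submodule.exists_mvPolynomial_ne_zero_eval_eq_zero (hlt V hV)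
  refine ⟨∏ V ∈ hs.toFinset, P V, Finset.prod_ne_zero_iff.mpr fun V hV => hP0 V (by simpa using hV),
    fun V hV v hv => ?_⟩
  rw [eval_prod]
  exact Finset.prod_eq_zero (hs.mem_toFinset.mpr hV) (hPV V hV v hv)

end LinearForms

theorem IntermediateField.comap_linearCombination_lt_top {K L ι : Type*} [Field K] [Field L]
    [Algebra K L] [Fintype ι] {x : ι → L} (hgen : adjoin K (Set.range x) = ⊤)
    {F : IntermediateField K L} (hF : F ≠ ⊤) :
    F.toSubalgebra.toSubmodule.comap (Fintype.linearCombination K x) < ⊤ := by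
  classical
  refine lt_top_iff_ne_top.mpr fun htop => hF (eq_top_iff.mpr ?_)
  rw [← hgen, adjoin_le_iff, Set.range_subset_iff]
  intro i
  have hi : Pi.single i 1 ∈ F.toSubalgebra.toSubmodule.comap (Fintype.linearCombination K x) :=
    htop ▸ Submodule.mem_top
  simpa [Fintype.linearCombination_apply, Pi.single_apply] using hi

theorem stmt_4_general (K L : Type*) [Field K] [Field L] [Algebra K L]
    [FiniteDimensional K L] [Algebra.IsSeparable K L]
    (n : ℕ) (x : Fin n → L)
    (hgen : IntermediateField.adjoin K (Set.range x) = ⊤) :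
    ∃ R : MvPolynomial (Fin n) K, R ≠ 0 ∧
      ∀ lam : Fin n → K, MvPolynomial.eval lam R ≠ 0 →
        IntermediateField.adjoin K {∑ i, lam i • x i} = ⊤ := by
  have : Finite (IntermediateField K L) :=
    Field.finite_intermediateField_of_exists_primitive_element K L
      (Field.exists_primitive_element K L)
  let bad : Set (Submodule K (Fin n → K)) :=
    (fun F : IntermediateField K L => F.toSubalgebra.toSubmodule.comap
      (Fintype.linearCombination K x)) '' {F | F ≠ ⊤}
  obtain ⟨R, hR0, hR⟩ := (Set.toFinite bad).exists_mvPolynomial_ne_zero_eval_eq_zero <| by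
    rintro _ ⟨F, hF, rfl⟩
    exact IntermediateField.comap_linearCombination_lt_top hgen hF
  refine ⟨R, hR0, fun lam hlam => by_contra fun htop => hlam (hR _ ⟨_, htop, rfl⟩ lam ?_)⟩
  simp [Fintype.linearCombination_apply]

/-- For a finite separable extension `L/K` with `K` infinite and
`L = K(x_1, …, x_n)`, there is a nonzero polynomial `R ∈ K[Λ_1, …, Λ_n]` such that
whenever `R(λ_1, …, λ_n) ≠ 0`, the element `λ_1 x_1 + ⋯ + λ_n x_n` is a primitive
element of `L/K`. -/
theorem stmt_4 (K L : Type*) [Field K] [Field L] [Algebra K L]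
    [FiniteDimensional K L] [Algebra.IsSeparable K L] [Infinite K]
    (n : ℕ) (x : Fin n → L)
    (hgen : IntermediateField.adjoin K (Set.range x) = ⊤) :
    ∃ R : MvPolynomial (Fin n) K, R ≠ 0 ∧
      ∀ lam : Fin n → K, MvPolynomial.eval lam R ≠ 0 →
        IntermediateField.adjoin K {∑ i, lam i • x i} = ⊤ :=
  stmt_4_general K L n x hgen
end

section
/- The homogeneous cubic polynomial P = x_1^3 + 3·x_2^3 + x_0^2·x_2 − x_0·x_1^2 + x_1·x_2^2 + x_0·x_1·x_2 is irreducible in the polynomial ring ℂ[x_0, x_1, x_2]. -/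
/-!
Viewed as a polynomial in `x₀` over the UFD `ℂ[x₁, x₂]`, the cubic is the quadratic
`x₂ x₀² + (x₁x₂ - x₁²) x₀ + (x₁³ + 3x₂³ + x₁x₂²)`. It is primitive, because the prime `x₂`
divides its leading coefficient but not its constant term. By Gauss's lemma it therefore suffices
that it has no root over `Frac ℂ[x₁, x₂]`, i.e. that its discriminant
`x₁⁴ - 6x₁³x₂ + x₁²x₂² - 4x₁x₂³ - 12x₂⁴` is not a square; as `ℂ[x₁, x₂]` is integrally closed,
it is enough to rule out a square root in `ℂ[x₁, x₂]` itself. Setting `x₂ = 1` gives the quartic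
`t⁴ - 6t³ + t² - 4t - 12`, which is separable and hence squarefree, so it is not a square.
-/

open MvPolynomial

namespace Polynomial

theorem isPrimitive_of_irreducible_coeff_of_not_dvd {R : Type*} [CommRing R] {p : R[X]} {i j : ℕ}
    (hi : Irreducible (p.coeff i)) (hij : ¬p.coeff i ∣ p.coeff j) : p.IsPrimitive := by
  intro r hr
  rw [C_dvd_iff_dvd_coeff] at hr
  obtain ⟨s, hs⟩ := hr i
  refine (hi.isUnit_or_isUnit hs).resolve_right fun hs_unit => hij ?_
  rw [hs]
  exact (associated_mul_unit_right r s hs_unit).symm.dvd.trans (hr j)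

theorem irreducible_quadratic_of_discrim_ne_sq {K : Type*} [Field K] {a b c : K} (ha : a ≠ 0)
    (h : ∀ s : K, discrim a b c ≠ s ^ 2) : Irreducible (C a * X ^ 2 + C b * X + C c) := by
  refine irreducible_of_degree_le_three_of_not_isRoot (by simp [natDegree_quadratic ha])
    fun x hx => quadratic_ne_zero_of_discrim_ne_sq h x ?_
  simpa [sq] using hx

theorem irreducible_quadratic_of_isPrimitive_of_discrim_ne_sq {R : Type*} [CommRing R]
    [IsDomain R] [IsIntegrallyClosed R] {a b c : R} (ha : a ≠ 0)
    (hprim : (C a * X ^ 2 + C b * X + C c).IsPrimitive) (h : ∀ s : R, discrim a b c ≠ s ^ 2) :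
    Irreducible (C a * X ^ 2 + C b * X + C c) := by
  let φ := algebraMap R (FractionRing R)
  have hφ : Function.Injective φ := IsFractionRing.injective R (FractionRing R)
  have hdiscrim : discrim (φ a) (φ b) (φ c) = φ (discrim a b c) := by
    simp only [discrim, map_sub, map_mul, map_pow, map_ofNat]
  refine hprim.irreducible_of_irreducible_map_of_injective hφ ?_
  simp only [Polynomial.map_add, Polynomial.map_mul, Polynomial.map_pow, map_C, map_X]
  refine irreducible_quadratic_of_discrim_ne_sq ((map_ne_zero_iff φ hφ).mpr ha) fun s hs => ?_
  -- a square root of an element of `R` is integral over `R`, hence lies in `R`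
  obtain ⟨t, rfl⟩ := IsIntegrallyClosed.exists_algebraMap_eq_of_isIntegral_pow two_pos
    (hs ▸ hdiscrim ▸ isIntegral_algebraMap : IsIntegral R (s ^ 2))
  exact h t (hφ (by rw [← hdiscrim, hs, map_pow]))

theorem separable_quartic :
    (X ^ 4 - 6 * X ^ 3 + X ^ 2 - 4 * X - 12 : Polynomial ℂ).Separable := by
  -- Bézout identity for the quartic and its derivative, from the extended Euclidean algorithm
  have bezout : (-4 * X ^ 2 + 442 * X - 2054) * (X ^ 4 - 6 * X ^ 3 + X ^ 2 - 4 * X - 12)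
      + (X ^ 3 - 112 * X ^ 2 + 673 * X - 110)
        * derivative (X ^ 4 - 6 * X ^ 3 + X ^ 2 - 4 * X - 12 : Polynomial ℂ) = C 25088 := by
    simp only [derivative_sub, derivative_add, derivative_mul, derivative_X_pow,
      derivative_ofNat, derivative_X, Nat.cast_ofNat, map_ofNat]
    ring
  rw [separable_def']
  exact ⟨C 25088⁻¹ * (-4 * X ^ 2 + 442 * X - 2054),
    C 25088⁻¹ * (X ^ 3 - 112 * X ^ 2 + 673 * X - 110), by
      rw [mul_assoc, mul_assoc, ← mul_add, bezout, ← C_mul, inv_mul_cancel₀ (by norm_num), C_1]⟩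

end Polynomial

/- Here `X 0, X 1 : MvPolynomial (Fin 2) ℂ` stand for `x₁, x₂`: `finSuccEquiv` splits off `x₀`
and shifts the remaining indices down by one. -/

theorem discrim_ne_sq (s : MvPolynomial (Fin 2) ℂ) :
    discrim (X 1) (X 0 * X 1 - X 0 ^ 2) (X 0 ^ 3 + 3 * X 1 ^ 3 + X 0 * X 1 ^ 2) ≠ s ^ 2 := by
  intro hs
  set q := aeval (![Polynomial.X, 1] : Fin 2 → Polynomial ℂ) s
  have hq : q * q = Polynomial.X ^ 4 - 6 * Polynomial.X ^ 3 + Polynomial.X ^ 2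
      - 4 * Polynomial.X - 12 := by
    rw [← sq, ← map_pow, ← hs]
    simp only [discrim, map_sub, map_add, map_mul, map_pow, map_ofNat, aeval_X,
      Matrix.cons_val_zero, Matrix.cons_val_one, one_pow, mul_one]
    ring
  have hq_unit : IsUnit q := Polynomial.separable_quartic.squarefree q ⟨1, by rw [mul_one, hq]⟩
  have hdeg := Polynomial.natDegree_eq_zero_of_isUnit (hq_unit.mul hq_unit)
  have hdeg_quartic : (Polynomial.X ^ 4 - 6 * Polynomial.X ^ 3 + Polynomial.X ^ 2
      - 4 * Polynomial.X - 12 : Polynomial ℂ).natDegree = 4 := by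
    compute_degree!
  rw [hq, hdeg_quartic] at hdeg
  exact four_ne_zero hdeg

theorem isPrimitive_quadratic :
    (Polynomial.C (X 1) * Polynomial.X ^ 2 + Polynomial.C (X 0 * X 1 - X 0 ^ 2) * Polynomial.X
      + Polynomial.C (X 0 ^ 3 + 3 * X 1 ^ 3 + X 0 * X 1 ^ 2 : MvPolynomial (Fin 2) ℂ)).IsPrimitive := by
  refine Polynomial.isPrimitive_of_irreducible_coeff_of_not_dvd (i := 2) (j := 0) ?_ ?_
  all_goals
    simp only [Polynomial.coeff_add, Polynomial.coeff_C_mul, Polynomial.coeff_X_pow,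
      Polynomial.coeff_X, Polynomial.coeff_C]
    norm_num
  · exact (X_prime (R := ℂ)).irreducible
  · intro h
    simpa using map_dvd (eval ![1, 0]) h

/-- The homogeneous cubic `x₁³ + 3x₂³ + x₀²x₂ − x₀x₁² + x₁x₂² + x₀x₁x₂`
(the plane model equation of `X₀(14)`) is irreducible in `ℂ[x₀, x₁, x₂]`. -/
theorem stmt_10 :
    Irreducible ((X 1) ^ 3 + 3 * (X 2) ^ 3 + (X 0) ^ 2 * (X 2)
        - (X 0) * (X 1) ^ 2 + (X 1) * (X 2) ^ 2 + (X 0) * (X 1) * (X 2) :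
      MvPolynomial (Fin 3) ℂ) := by
  rw [← MulEquiv.irreducible_iff (finSuccEquiv ℂ 2).toMulEquiv]
  convert Polynomial.irreducible_quadratic_of_isPrimitive_of_discrim_ne_sq (X_ne_zero 1)
    isPrimitive_quadratic discrim_ne_sq using 1
  change finSuccEquiv ℂ 2 _ = _
  simp only [show (X 1 : MvPolynomial (Fin 3) ℂ) = X (Fin.succ 0) from rfl,
    show (X 2 : MvPolynomial (Fin 3) ℂ) = X (Fin.succ 1) from rfl, map_add, map_sub, map_mul,
    map_pow, map_ofNat, finSuccEquiv_X_zero, finSuccEquiv_X_succ]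
  ring
end

section
/- The homogeneous quartic polynomial P = −3·x_0^2·x_1^2 − 6·x_0·x_1^3 − 4·x_1^4 + 3·x_0^3·x_2 + 6·x_0^2·x_1·x_2 − 3·x_0·x_1^2·x_2 − 2·x_1^3·x_2 + 10·x_0^2·x_2^2 + 2·x_0·x_1·x_2^2 − 21·x_1^2·x_2^2 + 23·x_0·x_2^3 + 16·x_1·x_2^3 + 11·x_2^4 is irreducible in the polynomial ring ℂ[x_0, x_1, x_2]. -/
/-!
Write `P` as a cubic in `x₀` over `ℂ[x₁, x₂]`. Its leading coefficient is `3x₂`, and `x₂` does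
not divide its `x₀²`-coefficient, so it is primitive; hence a nontrivial factorization must have
a factor linear in `x₀` whose leading coefficient divides `3x₂`. Setting `x₂ = 1` turns that
coefficient into a unit, so `P(t, x, 1) = 0` would have a polynomial solution `t ∈ ℂ[x]`.
Comparing degrees gives `deg t ≤ 2`, and comparing coefficients rules out every quadratic `t`.
-/

namespace Polynomial

variable {R S : Type*} [CommRing R] [IsDomain R] [CommRing S]

theorem exists_isRoot_map_of_dvd_of_natDegree_eq_one {f a : R[X]} (φ : R →+* S)
    (hlc : IsUnit (φ f.leadingCoeff)) (hdvd : a ∣ f) (ha : a.natDegree = 1) :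
    ∃ s, (f.map φ).IsRoot s := by
  obtain ⟨b, rfl⟩ := hdvd
  obtain ⟨u, hu⟩ : IsUnit (φ (a.coeff 1)) := by
    rw [leadingCoeff_mul, map_mul, leadingCoeff, ha] at hlc
    exact isUnit_of_mul_isUnit_left hlc
  refine ⟨-(↑u⁻¹ * φ (a.coeff 0)), ?_⟩
  suffices (a.map φ).IsRoot (-(↑u⁻¹ * φ (a.coeff 0))) by
    simp only [Polynomial.map_mul, IsRoot, eval_mul] at this ⊢
    rw [this, zero_mul]
  conv_lhs => rw [eq_X_add_C_of_natDegree_le_one ha.le]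
  simp [← hu]

theorem IsPrimitive.irreducible_of_forall_not_isRoot_map {f : R[X]} (hf : f.IsPrimitive)
    (h2 : 2 ≤ f.natDegree) (h3 : f.natDegree ≤ 3) (φ : R →+* S)
    (hlc : IsUnit (φ f.leadingCoeff)) (hroot : ∀ s, ¬ (f.map φ).IsRoot s) :
    Irreducible f := by
  have hconst {a : R[X]} (hdvd : a ∣ f) (ha : a.natDegree = 0) : IsUnit a := by
    rw [eq_C_of_natDegree_eq_zero ha] at hdvd ⊢
    exact isUnit_C.mpr (hf _ hdvd)
  have hlin {a : R[X]} (hdvd : a ∣ f) : a.natDegree ≠ 1 := fun ha ↦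
    (exists_isRoot_map_of_dvd_of_natDegree_eq_one φ hlc hdvd ha).elim hroot
  refine ⟨fun hu ↦ by simp [natDegree_eq_zero_of_isUnit hu] at h2, fun a b hab ↦ ?_⟩
  have hdeg : a.natDegree + b.natDegree = f.natDegree := by
    rw [hab, natDegree_mul (left_ne_zero_of_mul (hab ▸ hf.ne_zero))
      (right_ne_zero_of_mul (hab ▸ hf.ne_zero))]
  have ha := hlin (Dvd.intro b hab.symm)
  have hb := hlin (Dvd.intro_left a hab.symm)
  by_cases ha0 : a.natDegree = 0
  · exact .inl (hconst (Dvd.intro b hab.symm) ha0)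
  · exact .inr (hconst (Dvd.intro_left a hab.symm) (by omega))

end Polynomial

theorem isUnit_ofNat_three (A : Type*) [Semiring A] [Algebra ℂ A] : IsUnit (3 : A) :=
  map_ofNat (algebraMap ℂ A) 3 ▸ (IsUnit.mk0 (3 : ℂ) three_ne_zero).map (algebraMap ℂ A)

section AffineCubic

open Polynomial

/-- `P(t, x, 1)`. -/
noncomputable def affineCubic (t : ℂ[X]) : ℂ[X] :=
  3 * t ^ 3 + (-3 * X ^ 2 + 6 * X + 10) * t ^ 2 + (-6 * X ^ 3 - 3 * X ^ 2 + 2 * X + 23) * t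
    + (-4 * X ^ 4 - 2 * X ^ 3 - 21 * X ^ 2 + 16 * X + 11)

theorem natDegree_le_two_of_affineCubic_eq_zero {t : ℂ[X]} (ht : affineCubic t = 0) :
    t.natDegree ≤ 2 := by
  by_contra! hdeg
  set lower := (-3 * X ^ 2 + 6 * X + 10) * t ^ 2 + (-6 * X ^ 3 - 3 * X ^ 2 + 2 * X + 23) * t
    + (-4 * X ^ 4 - 2 * X ^ 3 - 21 * X ^ 2 + 16 * X + 11) with hlower
  have hlow : lower.natDegree < 3 * t.natDegree := by
    have : lower.natDegree ≤ 2 * t.natDegree + 2 := by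
      rw [hlower]
      compute_degree
      omega
    omega
  have htop : (3 * t ^ 3 + lower).coeff (3 * t.natDegree) = 3 * t.leadingCoeff ^ 3 := by
    rw [coeff_add, coeff_eq_zero_of_natDegree_lt hlow, add_zero, coeff_ofNat_mul,
      coeff_pow_mul_natDegree]
  rw [show 3 * t ^ 3 + lower = 0 by rw [← ht, affineCubic]; ring, coeff_zero, eq_comm] at htop
  have : t = 0 := by simpa using htop
  simp [this] at hdeg

theorem affineCubic_quadratic_ne_zero (a b c : ℂ) :
    affineCubic (C c * X ^ 2 + C b * X + C a) ≠ 0 := by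
  intro h
  rw [show affineCubic (C c * X ^ 2 + C b * X + C a) =
      C (3 * c ^ 3 - 3 * c ^ 2) * X ^ 6
      + C (9 * b * c ^ 2 - 6 * b * c + 6 * c ^ 2 - 6 * c) * X ^ 5
      + C (9 * a * c ^ 2 + 9 * b ^ 2 * c - 6 * a * c - 3 * b ^ 2 + 12 * b * c + 10 * c ^ 2
          - 6 * b - 3 * c - 4) * X ^ 4
      + C (18 * a * b * c + 3 * b ^ 3 - 6 * a * b + 12 * a * c + 6 * b ^ 2 + 20 * b * c
          - 6 * a - 3 * b + 2 * c - 2) * X ^ 3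
      + C (9 * a ^ 2 * c + 9 * a * b ^ 2 - 3 * a ^ 2 + 12 * a * b + 20 * a * c + 10 * b ^ 2
          - 3 * a + 2 * b + 23 * c - 21) * X ^ 2
      + C (9 * a ^ 2 * b + 6 * a ^ 2 + 20 * a * b + 2 * a + 23 * b + 16) * X
      + C (3 * a ^ 3 + 10 * a ^ 2 + 23 * a + 11) by
    simp only [affineCubic, map_add, map_sub, map_mul, map_pow, map_ofNat]
    ring] at h
  have e6 := congrArg (coeff · 6) h
  have e5 := congrArg (coeff · 5) h
  have e4 := congrArg (coeff · 4) h
  have e3 := congrArg (coeff · 3) h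
  have e2 := congrArg (coeff · 2) h
  simp only [coeff_add, coeff_C_mul, coeff_X_pow, coeff_X, coeff_C, coeff_zero] at e6 e5 e4 e3 e2
  norm_num at e6 e5 e4 e3 e2
  have hc : c ^ 2 * (c - 1) = 0 := by linear_combination e6 / 3
  rcases mul_eq_zero.mp hc with hc | hc
  -- For `c = 0`, the `x⁴`- and `x³`-coefficients determine `a` from `b`, and the
  -- `x²`-coefficient reduces modulo `3b² + 6b + 4` to `-(2/3)(9b + 22)`.
  · obtain rfl : c = 0 := pow_eq_zero_iff two_ne_zero |>.mp hc
    obtain rfl : a = -5 / 2 * b - 11 / 3 := by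
      linear_combination (b + 1) / 2 * e3 + ((b + 1) * b / 2 - a - 7 / 6) * e4
    obtain rfl : b = -22 / 9 := by
      linear_combination -(1 / 6) * (e2 - (107 / 12 + 15 / 2 * b) * e4)
    norm_num at e4
  · obtain rfl : c = 1 := sub_eq_zero.mp hc
    obtain rfl : b = 0 := by linear_combination e5 / 3
    obtain rfl : a = -1 := by linear_combination e4 / 3
    norm_num at e3

theorem affineCubic_ne_zero (t : ℂ[X]) : affineCubic t ≠ 0 := by
  intro ht
  have hquad : t = C (t.coeff 2) * X ^ 2 + C (t.coeff 1) * X + C (t.coeff 0) := by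
    conv_lhs => rw [t.as_sum_range' 3 (by linarith [natDegree_le_two_of_affineCubic_eq_zero ht])]
    simp only [← C_mul_X_pow_eq_monomial, Finset.sum_range_succ, Finset.range_one,
      Finset.sum_singleton, pow_zero, mul_one, pow_one]
    ring
  exact affineCubic_quadratic_ne_zero _ _ _ (hquad ▸ ht)

end AffineCubic

section Cubic

open MvPolynomial

/-- `P` as a polynomial in `x₀`; here `X 0` and `X 1` stand for `x₁` and `x₂`. -/
noncomputable def cubic : Polynomial (MvPolynomial (Fin 2) ℂ) :=
  Polynomial.C (3 * X 1) * Polynomial.X ^ 3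
    + Polynomial.C (-3 * X 0 ^ 2 + 6 * X 0 * X 1 + 10 * X 1 ^ 2) * Polynomial.X ^ 2
    + Polynomial.C (-6 * X 0 ^ 3 - 3 * X 0 ^ 2 * X 1 + 2 * X 0 * X 1 ^ 2 + 23 * X 1 ^ 3)
      * Polynomial.X
    + Polynomial.C (-4 * X 0 ^ 4 - 2 * X 0 ^ 3 * X 1 - 21 * X 0 ^ 2 * X 1 ^ 2
      + 16 * X 0 * X 1 ^ 3 + 11 * X 1 ^ 4)

theorem natDegree_cubic : cubic.natDegree = 3 := by
  unfold cubic
  compute_degree!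

theorem coeff_three_cubic : cubic.coeff 3 = 3 * X 1 := by
  simp only [cubic, Polynomial.coeff_add, Polynomial.coeff_C_mul, Polynomial.coeff_X_pow,
    Polynomial.coeff_X, Polynomial.coeff_C]
  norm_num

theorem coeff_two_cubic : cubic.coeff 2 = -3 * X 0 ^ 2 + 6 * X 0 * X 1 + 10 * X 1 ^ 2 := by
  simp only [cubic, Polynomial.coeff_add, Polynomial.coeff_C_mul, Polynomial.coeff_X_pow,
    Polynomial.coeff_X, Polynomial.coeff_C]
  norm_num

theorem isPrimitive_cubic : cubic.IsPrimitive := by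
  intro r hr
  have hX : r ∣ X 1 := (isUnit_ofNat_three _).dvd_mul_left.mp
    (coeff_three_cubic ▸ (Polynomial.C_dvd_iff_dvd_coeff _ _).mp hr 3)
  refine ((X_prime (R := ℂ) (i := (1 : Fin 2))).irreducible.dvd_iff.mp hX).resolve_right ?_
  rintro ⟨u, rfl⟩
  have h2 := coeff_two_cubic ▸ (Polynomial.C_dvd_iff_dvd_coeff _ _).mp hr 2
  simpa using map_dvd (aeval ![(1 : ℂ), 0]) (dvd_of_mul_right_dvd h2)

noncomputable def dehomogenize : MvPolynomial (Fin 2) ℂ →+* Polynomial ℂ :=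
  (aeval ![Polynomial.X, 1]).toRingHom

theorem eval_map_dehomogenize_cubic (t : Polynomial ℂ) :
    (cubic.map dehomogenize).eval t = affineCubic t := by
  simp only [cubic, Polynomial.map_add, Polynomial.map_mul, Polynomial.map_pow,
    Polynomial.map_C, Polynomial.map_X, Polynomial.eval_add, Polynomial.eval_mul,
    Polynomial.eval_pow, Polynomial.eval_C, Polynomial.eval_X]
  simp only [dehomogenize, AlgHom.toRingHom_eq_coe, RingHom.coe_coe, map_add, map_sub, map_mul,
    map_neg, map_pow, map_ofNat, aeval_X, Matrix.cons_val_zero, Matrix.cons_val_one]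
  rw [affineCubic]
  ring

theorem irreducible_cubic : Irreducible cubic := by
  refine isPrimitive_cubic.irreducible_of_forall_not_isRoot_map (by simp [natDegree_cubic])
    (by simp [natDegree_cubic]) dehomogenize ?_ fun t ht ↦ ?_
  · rw [Polynomial.leadingCoeff, natDegree_cubic, coeff_three_cubic]
    simpa [dehomogenize] using isUnit_ofNat_three (Polynomial ℂ)
  · exact affineCubic_ne_zero t (eval_map_dehomogenize_cubic t ▸ ht)

end Cubic

open MvPolynomial

/-- The homogeneous quartic
`−3x₀²x₁² − 6x₀x₁³ − 4x₁⁴ + 3x₀³x₂ + 6x₀²x₁x₂ − 3x₀x₁²x₂ − 2x₁³x₂ + 10x₀²x₂²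
  + 2x₀x₁x₂² − 21x₁²x₂² + 23x₀x₂³ + 16x₁x₂³ + 11x₂⁴`
(a plane model equation of `X₀(14)`) is irreducible in `ℂ[x₀, x₁, x₂]`. -/
theorem stmt_11 :
    Irreducible (-3 * (X 0) ^ 2 * (X 1) ^ 2 - 6 * (X 0) * (X 1) ^ 3 - 4 * (X 1) ^ 4
        + 3 * (X 0) ^ 3 * (X 2) + 6 * (X 0) ^ 2 * (X 1) * (X 2)
        - 3 * (X 0) * (X 1) ^ 2 * (X 2) - 2 * (X 1) ^ 3 * (X 2)
        + 10 * (X 0) ^ 2 * (X 2) ^ 2 + 2 * (X 0) * (X 1) * (X 2) ^ 2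
        - 21 * (X 1) ^ 2 * (X 2) ^ 2 + 23 * (X 0) * (X 2) ^ 3
        + 16 * (X 1) * (X 2) ^ 3 + 11 * (X 2) ^ 4 :
      MvPolynomial (Fin 3) ℂ) := by
  rw [← MulEquiv.irreducible_iff (finSuccEquiv ℂ 2).toMulEquiv]
  convert irreducible_cubic
  show finSuccEquiv ℂ 2 _ = cubic
  simp only [map_add, map_sub, map_mul, map_neg, map_pow, map_ofNat, cubic,
    ← Fin.succ_zero_eq_one, ← Fin.succ_one_eq_two, finSuccEquiv_X_zero, finSuccEquiv_X_succ]
  ring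
end

section
/- Let Q(X) = −3·X^3 + X^2 + 2·X + 1 ∈ ℂ[X]. Then Q has three pairwise distinct complex roots, and any two distinct complex roots β ≠ β' of Q satisfy |β − β'| > 0.68692234. -/
theorem aux_ivt_14 : ∃ r ∈ Set.Icc (1.1578006739:ℝ) 1.1578006741,
    -3 * r ^ 3 + r ^ 2 + 2 * r + 1 = 0 := by
  have hab : (1.1578006739:ℝ) ≤ 1.1578006741 := by norm_num
  have hc : ContinuousOn (fun x : ℝ => -3 * x ^ 3 + x ^ 2 + 2 * x + 1)
      (Set.Icc (1.1578006739:ℝ) 1.1578006741) := by fun_prop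
  have h := intermediate_value_Icc' hab hc
  have h0 : (0:ℝ) ∈ Set.Icc
      (-3 * (1.1578006741:ℝ) ^ 3 + 1.1578006741 ^ 2 + 2 * 1.1578006741 + 1)
      (-3 * (1.1578006739:ℝ) ^ 3 + 1.1578006739 ^ 2 + 2 * 1.1578006739 + 1) := by
    constructor <;> norm_num
  obtain ⟨r, hr, hfr⟩ := h h0
  exact ⟨r, hr, hfr⟩

/-- The cubic `Q(X) = −3X³ + X² + 2X + 1` has three pairwise distinct complex
roots, and any two distinct complex roots `β ≠ β'` of `Q` satisfy
`|β − β'| > 0.68692234`. -/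
theorem stmt_14 :
    (∃ β₁ β₂ β₃ : ℂ, β₁ ≠ β₂ ∧ β₁ ≠ β₃ ∧ β₂ ≠ β₃ ∧
      ∀ z : ℂ, -3 * z ^ 3 + z ^ 2 + 2 * z + 1 = 0 ↔ (z = β₁ ∨ z = β₂ ∨ z = β₃)) ∧
    ∀ β β' : ℂ, -3 * β ^ 3 + β ^ 2 + 2 * β + 1 = 0 →
      -3 * β' ^ 3 + β' ^ 2 + 2 * β' + 1 = 0 → β ≠ β' →
        (0.68692234 : ℝ) < ‖β - β'‖ := by
  obtain ⟨r, ⟨hr1, hr2⟩, hfr⟩ := aux_ivt_14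
  set D : ℝ := (3 * r ^ 2 - 2 * r / 3 - 25 / 9) / 4 with hDdef
  have hD : 0 < D := by
    have : (0.68692234:ℝ)^2 < 3 * r ^ 2 - 2 * r / 3 - 25 / 9 := by nlinarith
    nlinarith
  set s : ℝ := Real.sqrt D with hsdef
  have hs : 0 < s := Real.sqrt_pos.2 hD
  have hs2 : s ^ 2 = D := Real.sq_sqrt hD.le
  set β₁ : ℂ := (r : ℂ) with hb1
  set β₂ : ℂ := (↑(-(r - 1/3)/2) : ℂ) + (s : ℂ) * Complex.I with hb2
  set β₃ : ℂ := (↑(-(r - 1/3)/2) : ℂ) - (s : ℂ) * Complex.I with hb3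
  have hfrc : -3 * (r:ℂ) ^ 3 + (r:ℂ) ^ 2 + 2 * (r:ℂ) + 1 = 0 := by
    exact_mod_cast congrArg (fun x : ℝ => (x : ℂ)) hfr
  have hs2c : (s:ℂ) ^ 2 = (3 * (r:ℂ) ^ 2 - 2 * (r:ℂ) / 3 - 25 / 9) / 4 := by
    have h := hs2.trans hDdef
    calc (s:ℂ) ^ 2 = ((s ^ 2 : ℝ) : ℂ) := by push_cast; ring
      _ = _ := by rw [h]; push_cast; ring
  have hI : (Complex.I) ^ 2 = -1 := Complex.I_sq
  have key : ∀ z : ℂ, -3 * z ^ 3 + z ^ 2 + 2 * z + 1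
      = -3 * (z - β₁) * (z - β₂) * (z - β₃) := by
    intro z
    rw [hb1, hb2, hb3]
    push_cast
    linear_combination (1 : ℂ) * hfrc + 3 * (z - (r:ℂ)) * hs2c
      + (-3 * (z - (r:ℂ)) * (s:ℂ) ^ 2) * hI
  have hroot : ∀ z : ℂ, -3 * z ^ 3 + z ^ 2 + 2 * z + 1 = 0 ↔
      (z = β₁ ∨ z = β₂ ∨ z = β₃) := by
    intro z
    rw [key z]
    constructor
    · intro h
      rcases mul_eq_zero.1 h with h | h
      · rcases mul_eq_zero.1 h with h | h
        · rcases mul_eq_zero.1 h with h | h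
          · norm_num at h
          · exact Or.inl (sub_eq_zero.1 h)
        · exact Or.inr (Or.inl (sub_eq_zero.1 h))
      · exact Or.inr (Or.inr (sub_eq_zero.1 h))
    · rintro (rfl | rfl | rfl) <;> ring
  have him1 : β₁.im = 0 := by simp [hb1]
  have him2 : β₂.im = s := by simp [hb2]
  have him3 : β₃.im = -s := by simp [hb3]
  have hne12 : β₁ ≠ β₂ := fun h => by
    have := congrArg Complex.im h; rw [him1, him2] at this; exact hs.ne this
  have hne13 : β₁ ≠ β₃ := fun h => by
    have := congrArg Complex.im h; rw [him1, him3] at this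
    exact hs.ne (by linarith)
  have hne23 : β₂ ≠ β₃ := fun h => by
    have := congrArg Complex.im h; rw [him2, him3] at this; linarith
  -- distance bounds
  have hre1 : β₁.re = r := by simp [hb1]
  have hre2 : β₂.re = -(r - 1/3)/2 := by simp [hb2]
  have hre3 : β₃.re = -(r - 1/3)/2 := by simp [hb3]
  have hbig : ∀ γ γ' : ℂ, γ.re - γ'.re ≥ (1.5:ℝ) →
      (0.68692234 : ℝ) < ‖γ - γ'‖ := by
    intro γ γ' h
    have h1 : |(γ - γ').re| ≤ ‖γ - γ'‖ := Complex.abs_re_le_norm _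
    have h2 : (γ - γ').re = γ.re - γ'.re := by simp
    have : (1.5:ℝ) ≤ |(γ - γ').re| := by
      rw [h2]; exact le_trans h (le_abs_self _)
    linarith
  have hgap12 : β₁.re - β₂.re ≥ (1.5:ℝ) := by
    rw [hre1, hre2]; nlinarith
  have hgap13 : β₁.re - β₃.re ≥ (1.5:ℝ) := by
    rw [hre1, hre3]; nlinarith
  have hd12 : (0.68692234 : ℝ) < ‖β₁ - β₂‖ := hbig _ _ hgap12
  have hd13 : (0.68692234 : ℝ) < ‖β₁ - β₃‖ := hbig _ _ hgap13
  have hd23 : (0.68692234 : ℝ) < ‖β₂ - β₃‖ := by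
    have h1 : |(β₂ - β₃).im| ≤ ‖β₂ - β₃‖ := Complex.abs_im_le_norm _
    have h2 : (β₂ - β₃).im = 2 * s := by
      simp [Complex.sub_im, him2, him3]; ring
    have h3 : (0.68692234 : ℝ) < 2 * s := by
      have h4 : (0.68692234:ℝ)^2 < (2*s)^2 := by nlinarith
      nlinarith
    calc (0.68692234 : ℝ) < 2 * s := h3
      _ ≤ |(β₂ - β₃).im| := by rw [h2]; exact le_abs_self _
      _ ≤ _ := h1
  have hsymm : ∀ γ γ' : ℂ, (0.68692234 : ℝ) < ‖γ - γ'‖ →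
      (0.68692234 : ℝ) < ‖γ' - γ‖ := by
    intro γ γ' h; rwa [norm_sub_rev] at h
  refine ⟨⟨β₁, β₂, β₃, hne12, hne13, hne23, hroot⟩, ?_⟩
  intro β β' h h' hne
  rcases (hroot β).1 h with rfl | rfl | rfl <;>
    rcases (hroot β').1 h' with rfl | rfl | rfl <;>
      first
        | exact absurd rfl hne
        | exact hd12 | exact hd13 | exact hd23
        | exact hsymm _ _ hd12 | exact hsymm _ _ hd13 | exact hsymm _ _ hd23
end
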